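/- arXiv:1804.02857 — 3 statements merged into one kernel-verified Lean document; each statement's English description precedes it below -/
import Mathlib

section
/- The dual cone of the cone D^n of diagonally dominant symmetric matrices with nonnegative diagonal (matrices W with W_ii ≥ Σ_{j≠i}|W_ij|) equals the set of symmetric matrices W with W_ii ≥ 0 for all i and W_ii + W_jj − 2|W_ij| ≥ 0 for all i < j. -/
/-!
Necessity: the rank-one matrices `v vᵀ` with `v = eᵢ` or `v = eᵢ ± eⱼ` lie in `D^n`, and
`⟨W, v vᵀ⟩ = vᵀ W v` equals `W_ii`, resp. `W_ii + W_jj ± 2 W_ij`.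
Sufficiency: for `X ∈ D^n`, bounding each `X_ii` below by `∑_{j≠i} |X_ij|` and pairing the
`(i, j)` and `(j, i)` terms gives `⟨W, X⟩ ≥ ∑_{i<j} (W_ii + W_jj - 2|W_ij|) |X_ij| ≥ 0`.
-/

open Finset

namespace Matrix

variable {ι : Type*} [Fintype ι]

theorem sum_sum_mul_vecMulVec_self (W : Matrix ι ι ℝ) (v : ι → ℝ) :
    ∑ a, ∑ b, W a b * vecMulVec v v a b = v ⬝ᵥ W *ᵥ v := by
  simp only [dotProduct, mulVec, vecMulVec_apply, mul_sum]
  exact sum_congr rfl fun a _ => sum_congr rfl fun b _ => by ring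

variable [DecidableEq ι]

theorem sum_sum_erase_comm {M : Type*} [AddCommMonoid M] (g : ι → ι → M) :
    ∑ i, ∑ j ∈ univ.erase i, g i j = ∑ i, ∑ j ∈ univ.erase i, g j i :=
  sum_comm' fun i j => by simp [ne_comm]

theorem sum_sum_erase_nonneg {f : ι → ι → ℝ} (hf : ∀ i j, i ≠ j → 0 ≤ f i j + f j i) :
    0 ≤ ∑ i, ∑ j ∈ univ.erase i, f i j := by
  have hsum : 0 ≤ ∑ i, ∑ j ∈ univ.erase i, (f i j + f j i) :=
    sum_nonneg fun i _ => sum_nonneg fun j hj => hf i j (ne_of_mem_erase hj).symm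
  rw [sum_congr rfl fun i _ => sum_add_distrib, sum_add_distrib, ← sum_sum_erase_comm f] at hsum
  linarith

def IsDiagDominant (X : Matrix ι ι ℝ) : Prop :=
  ∀ i, ∑ j ∈ univ.erase i, |X i j| ≤ X i i

theorem isDiagDominant_vecMulVec_self {v : ι → ℝ}
    (hv : ∀ a, v a ≠ 0 → ∑ b, |v b| ≤ 2 * |v a|) : (vecMulVec v v).IsDiagDominant := by
  intro a
  simp only [vecMulVec_apply, abs_mul, ← mul_sum]
  by_cases ha : v a = 0
  · simp [ha]
  have hrow : ∑ b ∈ univ.erase a, |v b| ≤ |v a| := by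
    have := hv a ha
    rw [← add_sum_erase _ _ (mem_univ a)] at this
    linarith
  calc |v a| * ∑ b ∈ univ.erase a, |v b| ≤ |v a| * |v a| := by gcongr
    _ = v a * v a := abs_mul_abs_self _

theorem isDiagDominant_vecMulVec_single (i : ι) :
    (vecMulVec (Pi.single i 1) (Pi.single i 1) : Matrix ι ι ℝ).IsDiagDominant := by
  refine isDiagDominant_vecMulVec_self fun a ha => ?_
  obtain rfl : a = i := by by_contra h; simp [h] at ha
  rw [Fintype.sum_eq_single a fun b hb => by simp [hb]]
  norm_num

theorem isDiagDominant_vecMulVec_single_add_smul_single {i j : ι} (hij : i ≠ j) {s : ℝ}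
    (hs : |s| = 1) :
    (vecMulVec (Pi.single i 1 + s • Pi.single j 1) (Pi.single i 1 + s • Pi.single j 1) :
      Matrix ι ι ℝ).IsDiagDominant := by
  refine isDiagDominant_vecMulVec_self fun a ha => ?_
  rw [Fintype.sum_eq_add i j hij fun b hb => by simp [hb.1, hb.2]]
  by_cases hai : a = i
  · subst hai; norm_num [hij, hij.symm, hs]
  · have haj : a = j := by by_contra h; simp [hai, h] at ha
    subst haj; norm_num [hij, hij.symm, hs]

/-- Membership in the dual cone of `D^n` for the trace pairing `⟨W, X⟩ = ∑ i j, W i j * X i j`. -/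
def IsDiagDominantDual (W : Matrix ι ι ℝ) : Prop :=
  ∀ X : Matrix ι ι ℝ, X.IsSymm → X.IsDiagDominant → 0 ≤ ∑ i, ∑ j, W i j * X i j

namespace IsDiagDominantDual

variable {W : Matrix ι ι ℝ}

theorem dotProduct_mulVec_nonneg (hW : W.IsDiagDominantDual) {v : ι → ℝ}
    (hv : (vecMulVec v v).IsDiagDominant) : 0 ≤ v ⬝ᵥ W *ᵥ v :=
  sum_sum_mul_vecMulVec_self W v ▸ hW _ (transpose_vecMulVec v v) hv

theorem diag_nonneg (hW : W.IsDiagDominantDual) (i : ι) : 0 ≤ W i i := by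
  simpa using hW.dotProduct_mulVec_nonneg (isDiagDominant_vecMulVec_single i)

theorem add_add_mul_nonneg (hW : W.IsDiagDominantDual) {i j : ι} (hij : i ≠ j) (s : ℝ)
    (hs : |s| = 1) : 0 ≤ W i i + W j j + s * (W i j + W j i) := by
  have hs2 : s ^ 2 = 1 := by rw [← sq_abs, hs, one_pow]
  have := hW.dotProduct_mulVec_nonneg (isDiagDominant_vecMulVec_single_add_smul_single hij hs)
  simp only [mulVec_add, add_dotProduct, dotProduct_add, mulVec_smul, smul_dotProduct,
    dotProduct_smul, mulVec_single_one, single_dotProduct, col_apply, smul_eq_mul, one_mul] at this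
  linear_combination this + W j j * hs2

theorem add_sub_two_mul_abs_nonneg (hW : W.IsDiagDominantDual) (hsymm : W.IsSymm) {i j : ι}
    (hij : i ≠ j) : 0 ≤ W i i + W j j - 2 * |W i j| := by
  have hpair := hW.add_add_mul_nonneg hij
  rw [hsymm.apply i j] at hpair
  rcases abs_choice (W i j) with h | h
  · linarith [hpair (-1) (by norm_num)]
  · linarith [hpair 1 (by norm_num)]

end IsDiagDominantDual

theorem isDiagDominantDual_of_forall {W : Matrix ι ι ℝ} (hW : W.IsSymm) (hdiag : ∀ i, 0 ≤ W i i)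
    (hpair : ∀ i j, i ≠ j → 0 ≤ W i i + W j j - 2 * |W i j|) : W.IsDiagDominantDual := by
  intro X hX hdom
  calc 0 ≤ ∑ a, ∑ b ∈ univ.erase a, (W a a * |X a b| + W a b * X a b) := by
        refine sum_sum_erase_nonneg fun a b hab => ?_
        rw [hX.apply a b, hW.apply a b]
        have hprod : -(|W a b| * |X a b|) ≤ W a b * X a b := by
          rw [← abs_mul]; exact neg_abs_le _
        nlinarith [mul_nonneg (hpair a b hab) (abs_nonneg (X a b))]
    _ = ∑ a, W a a * ∑ b ∈ univ.erase a, |X a b| + ∑ a, ∑ b ∈ univ.erase a, W a b * X a b := by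
        simp only [sum_add_distrib, mul_sum]
    _ ≤ ∑ a, W a a * X a a + ∑ a, ∑ b ∈ univ.erase a, W a b * X a b := by
        gcongr with a
        exacts [hdiag a, hdom a]
    _ = ∑ a, ∑ b, W a b * X a b := by
        rw [← sum_add_distrib]
        exact sum_congr rfl fun a _ => add_sum_erase _ (fun b => W a b * X a b) (mem_univ a)

theorem isDiagDominantDual_iff {W : Matrix ι ι ℝ} (hW : W.IsSymm) :
    W.IsDiagDominantDual ↔
      (∀ i, 0 ≤ W i i) ∧ ∀ i j, i ≠ j → 0 ≤ W i i + W j j - 2 * |W i j| :=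
  ⟨fun h => ⟨h.diag_nonneg, fun _ _ => h.add_sub_two_mul_abs_nonneg hW⟩,
    fun ⟨hdiag, hpair⟩ => isDiagDominantDual_of_forall hW hdiag hpair⟩

end Matrix

/-- The dual cone of the cone `D^n` of diagonally dominant symmetric matrices
(`X_ii ≥ Σ_{j≠i} |X_ij|`, which forces a nonnegative diagonal), with respect to
the trace inner product, is exactly the set of symmetric matrices `W` with
`W_ii ≥ 0` for all `i` and `W_ii + W_jj − 2|W_ij| ≥ 0` for all `i < j`. -/
theorem stmt_4 {n : ℕ} (W : Matrix (Fin n) (Fin n) ℝ) (hW : W.IsSymm) :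
    (∀ X : Matrix (Fin n) (Fin n) ℝ, X.IsSymm →
        (∀ i, ∑ j ∈ univ.erase i, |X i j| ≤ X i i) →
        0 ≤ ∑ i, ∑ j, W i j * X i j) ↔
      (∀ i, 0 ≤ W i i) ∧ ∀ i j, i < j → 0 ≤ W i i + W j j - 2 * |W i j| := by
  refine (Matrix.isDiagDominantDual_iff hW).trans (and_congr_right fun _ => ?_)
  refine ⟨fun h i j hij => h i j hij.ne, fun h i j hij => hij.lt_or_gt.elim (h i j) fun hji => ?_⟩
  have := h j i hji
  rwa [hW.apply i j, add_comm (W j j)] at this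
end

section
/- Consider a QCQP min{xᵀQ₀x + β₀ᵀx + γ₀ : xᵀQₖx + βₖᵀx + γₖ ≤ 0, k=1,…,m} with all matrices Qₖ (k=0,…,m) having zero diagonals. Then the optimal values of its SDP relaxation, SOCP relaxation, and LP (diagonally-dominant dual cone) relaxation are equal: ζ*_SDP = ζ*_SOCP = ζ*_LP. -/
open Matrix Finset

/-- The trace inner product `A • B = Σ_{ij} A_ij B_ij`. -/
noncomputable def minner {ι : Type*} [Fintype ι] (A B : Matrix ι ι ℝ) : ℝ :=
  ∑ i, ∑ j, A i j * B i j

/-- `Q̄ = [[γ, βᵀ/2],[β/2, Q]]`. -/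
noncomputable def Qbar {n : ℕ} (Q : Matrix (Fin n) (Fin n) ℝ) (β : Fin n → ℝ)
    (γ : ℝ) : Matrix (Fin 1 ⊕ Fin n) (Fin 1 ⊕ Fin n) ℝ :=
  Matrix.fromBlocks (Matrix.of fun _ _ => γ) (Matrix.of fun _ j => β j / 2)
    (Matrix.of fun i _ => β i / 2) Q

/-- Feasibility of `W̄` in the SDP relaxation: `W̄ ⪰ 0`, `W̄_{00} = 1`, and
`Q̄ₖ • W̄ ≤ 0` for every constraint `k`. -/
noncomputable def SDPfeas {n m : ℕ} (Q : Fin m → Matrix (Fin n) (Fin n) ℝ)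
    (β : Fin m → Fin n → ℝ) (γ : Fin m → ℝ)
    (W : Matrix (Fin 1 ⊕ Fin n) (Fin 1 ⊕ Fin n) ℝ) : Prop :=
  W.PosSemidef ∧ W (Sum.inl 0) (Sum.inl 0) = 1 ∧
    ∀ k, minner (Qbar (Q k) (β k) (γ k)) W ≤ 0

/-- Feasibility in the SOCP relaxation: `W̄` symmetric, `W̄_{ii} ≥ 0`,
`W̄_{ij}² ≤ W̄_{ii} W̄_{jj}`, `W̄_{00} = 1`, and `Q̄ₖ • W̄ ≤ 0`. -/
noncomputable def SOCPfeas {n m : ℕ} (Q : Fin m → Matrix (Fin n) (Fin n) ℝ)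
    (β : Fin m → Fin n → ℝ) (γ : Fin m → ℝ)
    (W : Matrix (Fin 1 ⊕ Fin n) (Fin 1 ⊕ Fin n) ℝ) : Prop :=
  W.IsSymm ∧ (∀ i, 0 ≤ W i i) ∧ (∀ i j, (W i j) ^ 2 ≤ W i i * W j j) ∧
    W (Sum.inl 0) (Sum.inl 0) = 1 ∧
    ∀ k, minner (Qbar (Q k) (β k) (γ k)) W ≤ 0

/-- Feasibility in the LP relaxation: `W̄` symmetric, `W̄_{ii} ≥ 0`,
`W̄_{ii} + W̄_{jj} − 2|W̄_{ij}| ≥ 0`, `W̄_{00} = 1`, and `Q̄ₖ • W̄ ≤ 0`. -/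
noncomputable def LPfeas {n m : ℕ} (Q : Fin m → Matrix (Fin n) (Fin n) ℝ)
    (β : Fin m → Fin n → ℝ) (γ : Fin m → ℝ)
    (W : Matrix (Fin 1 ⊕ Fin n) (Fin 1 ⊕ Fin n) ℝ) : Prop :=
  W.IsSymm ∧ (∀ i, 0 ≤ W i i) ∧
    (∀ i j, 0 ≤ W i i + W j j - 2 * |W i j|) ∧
    W (Sum.inl 0) (Sum.inl 0) = 1 ∧
    ∀ k, minner (Qbar (Q k) (β k) (γ k)) W ≤ 0

/-! Since every `Qₖ` has zero diagonal, neither the objective nor the constraints of the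
relaxations depend on the diagonal of the lower-right block `W` of `W̄ = [[1, bᵀ], [b, W]]`. An SDP
solution is SOCP feasible (its `2 × 2` principal minors are nonnegative) and an SOCP solution is LP
feasible (AM-GM). Conversely, adding `αI` to `W` keeps an LP solution feasible with the same
value, and for large `α` the Schur complement `W + αI - b bᵀ` is positive semidefinite, so the
result is SDP feasible. Hence the three relaxations attain the same sets of objective values. -/

theorem two_mul_abs_le_add_of_sq_le_mul {a b c : ℝ} (ha : 0 ≤ a) (hb : 0 ≤ b)
    (h : c ^ 2 ≤ a * b) : 2 * |c| ≤ a + b := by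
  nlinarith [sq_abs c, abs_nonneg c, sq_nonneg (a - b)]

namespace Matrix

variable {ι : Type*}

theorem PosSemidef.sq_apply_le_mul_apply [Fintype ι] [DecidableEq ι] {W : Matrix ι ι ℝ}
    (hW : W.PosSemidef) (i j : ι) : W i j ^ 2 ≤ W i i * W j j := by
  have hdet := (hW.submatrix ![i, j]).det_nonneg
  have hsymm : W j i = W i j := hW.1.apply i j
  simp only [det_fin_two, submatrix_apply, cons_val_zero, cons_val_one, hsymm] at hdet
  nlinarith

theorem posSemidef_add_smul_one [Fintype ι] [DecidableEq ι] {A : Matrix ι ι ℝ} (hA : A.IsSymm)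
    {c : ℝ} (hc : ∑ i, ∑ j, |A i j| ≤ c) : (A + c • 1).PosSemidef := by
  refine .of_dotProduct_mulVec_nonneg ?_ fun x => ?_
  · simpa [isHermitian_iff_isSymm] using hA.add (isSymm_one.smul c)
  have hsq : ∀ i, x i ^ 2 ≤ x ⬝ᵥ x := fun i => by
    simpa [dotProduct, sq] using
      single_le_sum (fun j _ => mul_self_nonneg (x j)) (mem_univ i)
  have hterm : ∀ i j, -(|A i j| * (x ⬝ᵥ x)) ≤ x i * A i j * x j := fun i j => by
    have hx : |x i * x j| ≤ x ⬝ᵥ x := by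
      rw [abs_mul]
      nlinarith [hsq i, hsq j, sq_abs (x i), sq_abs (x j), sq_nonneg (|x i| - |x j|)]
    refine neg_le_of_abs_le ?_
    rw [mul_right_comm, mul_comm, abs_mul]
    exact mul_le_mul_of_nonneg_left hx (abs_nonneg _)
  have hquad : -(c * (x ⬝ᵥ x)) ≤ x ⬝ᵥ A *ᵥ x := calc
    -(c * (x ⬝ᵥ x)) ≤ -((∑ i, ∑ j, |A i j|) * (x ⬝ᵥ x)) := by
      gcongr; exact dotProduct_self_star_nonneg x
    _ = ∑ i, ∑ j, -(|A i j| * (x ⬝ᵥ x)) := by simp [sum_mul]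
    _ ≤ ∑ i, ∑ j, x i * A i j * x j := by gcongr with i _ j _; exact hterm i j
    _ = x ⬝ᵥ A *ᵥ x := by simp [dotProduct, mulVec, mul_sum, mul_assoc, mul_left_comm]
  simp only [star_trivial, add_mulVec, smul_mulVec, one_mulVec, dotProduct_add, dotProduct_smul,
    smul_eq_mul]
  linarith

theorem posSemidef_fromBlocks_one_iff [Fintype ι] {κ : Type*} [Fintype κ] [DecidableEq κ]
    (B : Matrix κ ι ℝ) (D : Matrix ι ι ℝ) :
    (fromBlocks 1 B Bᵀ D).PosSemidef ↔ (D - Bᵀ * B).PosSemidef := by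
  let : Invertible (1 : Matrix κ κ ℝ) := invertibleOne
  simpa using PosDef.fromBlocks₁₁ B D PosDef.one

theorem eq_fromBlocks_one_of_isSymm {W : Matrix (Fin 1 ⊕ ι) (Fin 1 ⊕ ι) ℝ} (hW : W.IsSymm)
    (h00 : W (.inl 0) (.inl 0) = 1) :
    W = fromBlocks (1 : Matrix (Fin 1) (Fin 1) ℝ) W.toBlocks₁₂ W.toBlocks₁₂ᵀ W.toBlocks₂₂ := by
  ext (i | i) (j | j)
  · simp [Subsingleton.elim i 0, Subsingleton.elim j 0, h00]
  · rfl
  · exact hW.apply (.inl j) (.inr i)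
  · rfl

theorem exists_posSemidef_add_fromBlocks_smul_one [Fintype ι] [DecidableEq ι]
    {W : Matrix (Fin 1 ⊕ ι) (Fin 1 ⊕ ι) ℝ}
    (hW : W.IsSymm) (h00 : W (.inl 0) (.inl 0) = 1) :
    ∃ α : ℝ, (W + fromBlocks 0 0 0 (α • 1)).PosSemidef := by
  have hS : (W.toBlocks₂₂ - W.toBlocks₁₂ᵀ * W.toBlocks₁₂).IsSymm :=
    IsSymm.sub (congr_arg toBlocks₂₂ hW :) (by simp [IsSymm, transpose_mul])
  refine ⟨∑ i, ∑ j, |(W.toBlocks₂₂ - W.toBlocks₁₂ᵀ * W.toBlocks₁₂) i j|, ?_⟩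
  rw [eq_fromBlocks_one_of_isSymm hW h00, fromBlocks_add]
  simp only [add_zero]
  rw [posSemidef_fromBlocks_one_iff, add_sub_right_comm]
  exact posSemidef_add_smul_one hS le_rfl

end Matrix

theorem minner_add_right {ι : Type*} [Fintype ι] (A B C : Matrix ι ι ℝ) :
    minner A (B + C) = minner A B + minner A C := by
  simp [minner, mul_add, sum_add_distrib]

theorem minner_smul_one {ι : Type*} [Fintype ι] [DecidableEq ι] (A : Matrix ι ι ℝ) (c : ℝ) :
    minner A (c • 1) = c * A.trace := by
  simp [minner, one_apply, trace, mul_sum, mul_comm]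

theorem minner_Qbar_fromBlocks_zero {n : ℕ} (Q M : Matrix (Fin n) (Fin n) ℝ) (β : Fin n → ℝ)
    (γ : ℝ) : minner (Qbar Q β γ) (fromBlocks 0 0 0 M) = minner Q M := by
  simp [minner, Qbar, Fintype.sum_sum_type]

theorem minner_Qbar_add_fromBlocks_smul_one {n : ℕ} {Q : Matrix (Fin n) (Fin n) ℝ}
    (hQ : ∀ i, Q i i = 0) (β : Fin n → ℝ) (γ α : ℝ) (W : Matrix (Fin 1 ⊕ Fin n) (Fin 1 ⊕ Fin n) ℝ) :
    minner (Qbar Q β γ) (W + fromBlocks 0 0 0 (α • 1)) = minner (Qbar Q β γ) W := by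
  rw [minner_add_right, minner_Qbar_fromBlocks_zero, minner_smul_one]
  simp [trace, hQ]

section Relaxations

variable {n m : ℕ} {Q : Fin m → Matrix (Fin n) (Fin n) ℝ} {β : Fin m → Fin n → ℝ} {γ : Fin m → ℝ}
  {W : Matrix (Fin 1 ⊕ Fin n) (Fin 1 ⊕ Fin n) ℝ}

theorem SDPfeas.socpFeas (h : SDPfeas Q β γ W) : SOCPfeas Q β γ W := by
  obtain ⟨hW, h00, hcons⟩ := h
  exact ⟨isHermitian_iff_isSymm.mp hW.1, fun i => hW.diag_nonneg, hW.sq_apply_le_mul_apply,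
    h00, hcons⟩

theorem SOCPfeas.lpFeas (h : SOCPfeas Q β γ W) : LPfeas Q β γ W := by
  obtain ⟨hsymm, hdiag, hminor, h00, hcons⟩ := h
  refine ⟨hsymm, hdiag, fun i j => ?_, h00, hcons⟩
  linarith [two_mul_abs_le_add_of_sq_le_mul (hdiag i) (hdiag j) (hminor i j)]

theorem LPfeas.exists_sdpFeas {Q0 : Matrix (Fin n) (Fin n) ℝ} (hdiag0 : ∀ i, Q0 i i = 0)
    (hdiag : ∀ k i, Q k i i = 0) (β0 : Fin n → ℝ) (γ0 : ℝ) (h : LPfeas Q β γ W) :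
    ∃ W', SDPfeas Q β γ W' ∧ minner (Qbar Q0 β0 γ0) W' = minner (Qbar Q0 β0 γ0) W := by
  obtain ⟨hsymm, -, -, h00, hcons⟩ := h
  obtain ⟨α, hα⟩ := exists_posSemidef_add_fromBlocks_smul_one hsymm h00
  refine ⟨_, ⟨hα, by simpa using h00, fun k => ?_⟩, minner_Qbar_add_fromBlocks_smul_one hdiag0 ..⟩
  rw [minner_Qbar_add_fromBlocks_smul_one (hdiag k)]
  exact hcons k

end Relaxations

theorem objectiveValues_eq_of_reduction {α : Type*} {P R : α → Prop} (f : α → ℝ)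
    (hPR : ∀ x, P x → R x) (hRP : ∀ x, R x → ∃ y, P y ∧ f y = f x) :
    {v : EReal | ∃ x, P x ∧ v = f x} = {v : EReal | ∃ x, R x ∧ v = f x} := by
  ext v
  constructor
  · rintro ⟨x, hx, rfl⟩
    exact ⟨x, hPR x hx, rfl⟩
  · rintro ⟨x, hx, rfl⟩
    obtain ⟨y, hy, hfy⟩ := hRP x hx
    exact ⟨y, hy, by rw [hfy]⟩

theorem stmt_11_general {n m : ℕ}
    (Q0 : Matrix (Fin n) (Fin n) ℝ) (β0 : Fin n → ℝ) (γ0 : ℝ)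
    (Q : Fin m → Matrix (Fin n) (Fin n) ℝ) (β : Fin m → Fin n → ℝ)
    (γ : Fin m → ℝ)
    (hdiag0 : ∀ i, Q0 i i = 0) (hdiag : ∀ k i, Q k i i = 0) :
    sInf {v : EReal | ∃ W, SDPfeas Q β γ W ∧
        v = (minner (Qbar Q0 β0 γ0) W : ℝ)} =
      sInf {v : EReal | ∃ W, SOCPfeas Q β γ W ∧
        v = (minner (Qbar Q0 β0 γ0) W : ℝ)} ∧
    sInf {v : EReal | ∃ W, SOCPfeas Q β γ W ∧
        v = (minner (Qbar Q0 β0 γ0) W : ℝ)} =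
      sInf {v : EReal | ∃ W, LPfeas Q β γ W ∧
        v = (minner (Qbar Q0 β0 γ0) W : ℝ)} := by
  have lp_to_sdp := fun W (h : LPfeas Q β γ W) => h.exists_sdpFeas hdiag0 hdiag β0 γ0
  constructor
  · rw [objectiveValues_eq_of_reduction _ (fun _ h => h.socpFeas) fun W h => lp_to_sdp W h.lpFeas]
  · rw [objectiveValues_eq_of_reduction _ (fun _ h => h.lpFeas) fun W h =>
      (lp_to_sdp W h).imp fun _ ⟨hW', hval⟩ => ⟨hW'.socpFeas, hval⟩]

/-- Theorem 4.1: for a QCQP whose matrices `Q₀, Q₁, …, Qₘ` all have zero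
diagonals, the optimal values of the SDP, SOCP and LP relaxations coincide:
`ζ*_SDP = ζ*_SOCP = ζ*_LP`. -/
theorem stmt_11 {n m : ℕ}
    (Q0 : Matrix (Fin n) (Fin n) ℝ) (β0 : Fin n → ℝ) (γ0 : ℝ)
    (Q : Fin m → Matrix (Fin n) (Fin n) ℝ) (β : Fin m → Fin n → ℝ)
    (γ : Fin m → ℝ)
    (hsymm0 : Q0.IsSymm) (hsymm : ∀ k, (Q k).IsSymm)
    (hdiag0 : ∀ i, Q0 i i = 0) (hdiag : ∀ k i, Q k i i = 0) :
    sInf {v : EReal | ∃ W, SDPfeas Q β γ W ∧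
        v = (minner (Qbar Q0 β0 γ0) W : ℝ)} =
      sInf {v : EReal | ∃ W, SOCPfeas Q β γ W ∧
        v = (minner (Qbar Q0 β0 γ0) W : ℝ)} ∧
    sInf {v : EReal | ∃ W, SOCPfeas Q β γ W ∧
        v = (minner (Qbar Q0 β0 γ0) W : ℝ)} =
      sInf {v : EReal | ∃ W, LPfeas Q β γ W ∧
        v = (minner (Qbar Q0 β0 γ0) W : ℝ)} :=
  stmt_11_general Q0 β0 γ0 Q β γ hdiag0 hdiag
end

section
/- Under the zero-diagonal assumption on Q₀, …, Qₘ, the dual SDP problem max{μ : Q̄₀ + Σₖ ηₖ Q̄ₖ − μH̄₀ = S̄, ηₖ ≥ 0, S̄ ⪰ 0} is equivalent to the linear program max{μ : γ₀ + Σₖ ηₖγₖ − μ ≥ 0, β₀ + Σₖ ηₖβₖ = 0, Q₀ + Σₖ ηₖQₖ = 0, ηₖ ≥ 0}. -/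
/-!
`Q̄` is linear in `(Q, β, γ)` and `H̄₀ = Q̄(0, 0, 1)`, so the slack matrix is
`S̄ = Q̄(Q₀ + Σ ηₖQₖ, β₀ + Σ ηₖβₖ, γ₀ + Σ ηₖγₖ − μ)`, whose lower-right block has zero diagonal.
A positive semidefinite matrix with a zero diagonal entry has that whole row zero, so `S̄ ⪰ 0`
forces the `β`- and `Q`-blocks to vanish; conversely `Q̄(0, 0, s)` is diagonal and is `⪰ 0`
exactly when `s ≥ 0`.
-/

open Matrix Finset

/-- `H̄₀`: the matrix with `1` in the `(0,0)` entry and zeros elsewhere. -/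
noncomputable def Hbar (n : ℕ) : Matrix (Fin 1 ⊕ Fin n) (Fin 1 ⊕ Fin n) ℝ :=
  Matrix.fromBlocks (Matrix.of fun _ _ => 1) 0 0 0

namespace Matrix.PosSemidef

open scoped ComplexOrder

variable {ι 𝕜 : Type*} [Fintype ι] [DecidableEq ι] [RCLike 𝕜] {A : Matrix ι ι 𝕜}

theorem row_eq_zero_of_diag_eq_zero (hA : A.PosSemidef) {i : ι} (hii : A i i = 0) : A i = 0 := by
  have hquad : star (Pi.single i 1) ⬝ᵥ A *ᵥ Pi.single i 1 = 0 := by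
    simp [mulVec_single, hii]
  have hcol (j : ι) : A j i = 0 := by
    simpa [mulVec_single] using congrFun ((hA.dotProduct_mulVec_zero_iff _).mp hquad) j
  funext j
  rw [← hA.isHermitian.apply, hcol, star_zero, Pi.zero_apply]

end Matrix.PosSemidef

section Qbar

variable {n : ℕ}

theorem Qbar_add (Q Q' : Matrix (Fin n) (Fin n) ℝ) (β β' : Fin n → ℝ) (γ γ' : ℝ) :
    Qbar Q β γ + Qbar Q' β' γ' = Qbar (Q + Q') (β + β') (γ + γ') := by
  ext (_ | i) (_ | j) <;> simp [Qbar, add_div]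

theorem Qbar_sub (Q Q' : Matrix (Fin n) (Fin n) ℝ) (β β' : Fin n → ℝ) (γ γ' : ℝ) :
    Qbar Q β γ - Qbar Q' β' γ' = Qbar (Q - Q') (β - β') (γ - γ') := by
  ext (_ | i) (_ | j) <;> simp [Qbar, sub_div]

theorem smul_Qbar (c : ℝ) (Q : Matrix (Fin n) (Fin n) ℝ) (β : Fin n → ℝ) (γ : ℝ) :
    c • Qbar Q β γ = Qbar (c • Q) (c • β) (c * γ) := by
  ext (_ | i) (_ | j) <;> simp [Qbar, mul_div_assoc]

theorem Qbar_sum {κ : Type*} (s : Finset κ) (Q : κ → Matrix (Fin n) (Fin n) ℝ)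
    (β : κ → Fin n → ℝ) (γ : κ → ℝ) :
    ∑ k ∈ s, Qbar (Q k) (β k) (γ k) = Qbar (∑ k ∈ s, Q k) (∑ k ∈ s, β k) (∑ k ∈ s, γ k) := by
  ext (_ | i) (_ | j) <;> simp [Qbar, Matrix.sum_apply, Finset.sum_div]

theorem Hbar_eq_Qbar : Hbar n = Qbar 0 0 1 := by
  ext (_ | i) (_ | j) <;> simp [Qbar, Hbar]

theorem Qbar_zero_zero (γ : ℝ) :
    Qbar (0 : Matrix (Fin n) (Fin n) ℝ) 0 γ = diagonal (Sum.elim (fun _ => γ) 0) := by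
  ext (_ | i) (_ | j) <;> simp [Qbar, diagonal_apply, Fin.fin_one_eq_zero]

theorem posSemidef_Qbar_iff {Q : Matrix (Fin n) (Fin n) ℝ} (hQ : ∀ i, Q i i = 0)
    {β : Fin n → ℝ} {γ : ℝ} : (Qbar Q β γ).PosSemidef ↔ 0 ≤ γ ∧ β = 0 ∧ Q = 0 := by
  constructor
  · intro hS
    have hrow (i : Fin n) := hS.row_eq_zero_of_diag_eq_zero (i := .inr i) (hQ i)
    refine ⟨hS.diag_nonneg (i := .inl 0), funext fun i => ?_, funext₂ fun i j => ?_⟩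
    · simpa [Qbar] using congrFun (hrow i) (.inl 0)
    · simpa [Qbar] using congrFun (hrow i) (.inr j)
  · rintro ⟨hγ, rfl, rfl⟩
    rw [Qbar_zero_zero]
    exact PosSemidef.diagonal (by rintro (_ | _) <;> simp [hγ])

end Qbar

theorem stmt_15_general {n m : ℕ}
    (Q0 : Matrix (Fin n) (Fin n) ℝ) (β0 : Fin n → ℝ) (γ0 : ℝ)
    (Q : Fin m → Matrix (Fin n) (Fin n) ℝ) (β : Fin m → Fin n → ℝ)
    (γ : Fin m → ℝ)
    (hdiag0 : ∀ i, Q0 i i = 0) (hdiag : ∀ k i, Q k i i = 0) :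
    ∀ μ : ℝ,
      (∃ η : Fin m → ℝ, (∀ k, 0 ≤ η k) ∧
        (Qbar Q0 β0 γ0 + ∑ k, η k • Qbar (Q k) (β k) (γ k) -
          μ • Hbar n).PosSemidef) ↔
      (∃ η : Fin m → ℝ, (∀ k, 0 ≤ η k) ∧
        0 ≤ γ0 + ∑ k, η k * γ k - μ ∧
        β0 + ∑ k, η k • β k = 0 ∧
        Q0 + ∑ k, η k • Q k = 0) := by
  intro μ
  refine exists_congr fun η => and_congr_right fun _ => ?_
  have hcomb : Qbar Q0 β0 γ0 + ∑ k, η k • Qbar (Q k) (β k) (γ k) - μ • Hbar n =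
      Qbar (Q0 + ∑ k, η k • Q k) (β0 + ∑ k, η k • β k) (γ0 + ∑ k, η k * γ k - μ) := by
    simp only [Hbar_eq_Qbar, smul_Qbar, Qbar_sum, Qbar_add, Qbar_sub, smul_zero, mul_one,
      sub_zero]
  have hdiagS (i : Fin n) : (Q0 + ∑ k, η k • Q k) i i = 0 := by
    simp [Matrix.sum_apply, hdiag0, hdiag]
  rw [hcomb, posSemidef_Qbar_iff hdiagS]

/-- Under the zero-diagonal assumption on `Q₀, …, Qₘ`, the dual SDP
`max{μ : Q̄₀ + Σₖ ηₖQ̄ₖ − μH̄₀ = S̄ ⪰ 0, η ≥ 0}` is equivalent to the linear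
program `max{μ : γ₀ + Σₖηₖγₖ − μ ≥ 0, β₀ + Σₖηₖβₖ = 0, Q₀ + ΣₖηₖQₖ = 0, η ≥ 0}`:
they admit exactly the same feasible values `μ`. -/
theorem stmt_15 {n m : ℕ}
    (Q0 : Matrix (Fin n) (Fin n) ℝ) (β0 : Fin n → ℝ) (γ0 : ℝ)
    (Q : Fin m → Matrix (Fin n) (Fin n) ℝ) (β : Fin m → Fin n → ℝ)
    (γ : Fin m → ℝ)
    (hsymm0 : Q0.IsSymm) (hsymm : ∀ k, (Q k).IsSymm)
    (hdiag0 : ∀ i, Q0 i i = 0) (hdiag : ∀ k i, Q k i i = 0) :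
    ∀ μ : ℝ,
      (∃ η : Fin m → ℝ, (∀ k, 0 ≤ η k) ∧
        (Qbar Q0 β0 γ0 + ∑ k, η k • Qbar (Q k) (β k) (γ k) -
          μ • Hbar n).PosSemidef) ↔
      (∃ η : Fin m → ℝ, (∀ k, 0 ≤ η k) ∧
        0 ≤ γ0 + ∑ k, η k * γ k - μ ∧
        β0 + ∑ k, η k • β k = 0 ∧
        Q0 + ∑ k, η k • Q k = 0) :=
  stmt_15_general Q0 β0 γ0 Q β γ hdiag0 hdiag
end
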